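/- For any two classifiers f₁ and f₂ and any noise rate η ∈ [0, 1), the difference of noisy risks is proportional to the difference of clean risks: R^η(f₁) - R^η(f₂) = (1 - ηK/(K-1)) · (R(f₁) - R(f₂)). -/
import Mathlib


open Finset MeasureTheory

/-- Clipped logarithm: `L t = Real.log t` for `t > 0` and `L 0 = A`. -/
noncomputable def clog (A : ℝ) (t : ℝ) : ℝ := if t = 0 then A else Real.log t

/-- One-hot vector at label `y`. -/
def onehot {K : ℕ} (y : Fin K) : Fin K → ℝ := fun k => if k = y then 1 else 0

/-- Reverse Cross Entropy loss with clipping constant `A`. -/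
noncomputable def rce {K : ℕ} (A : ℝ) (p : Fin K → ℝ) (y : Fin K) : ℝ :=
  -∑ k, p k * clog A (onehot y k)

/-- `p` is a probability vector. -/
def IsProbVec {K : ℕ} (p : Fin K → ℝ) : Prop := (∀ k, 0 ≤ p k) ∧ ∑ k, p k = 1

/-- A classifier: pointwise a probability vector, coordinatewise measurable. -/
def IsClassifier {𝒳 : Type*} [MeasurableSpace 𝒳] {K : ℕ} (f : 𝒳 → Fin K → ℝ) : Prop :=
  (∀ x, IsProbVec (f x)) ∧ ∀ k : Fin K, Measurable fun xy : 𝒳 × Fin K => f xy.1 k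

/-- Clean RCE risk `R(f) = ∫ ℓ_rce(f x, y) dμ(x, y)`. -/
noncomputable def cleanRisk {𝒳 : Type*} [MeasurableSpace 𝒳] {K : ℕ} (A : ℝ)
    (μ : Measure (𝒳 × Fin K)) (f : 𝒳 → Fin K → ℝ) : ℝ :=
  ∫ xy, rce A (f xy.1) xy.2 ∂μ

/-- Noisy RCE risk under symmetric label noise with rate `η`. -/
noncomputable def symNoisyRisk {𝒳 : Type*} [MeasurableSpace 𝒳] {K : ℕ} (A : ℝ)
    (μ : Measure (𝒳 × Fin K)) (η : ℝ) (f : 𝒳 → Fin K → ℝ) : ℝ :=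
  ∫ xy, ((1 - η) * rce A (f xy.1) xy.2
      + (η / ((K : ℝ) - 1)) * ∑ k ∈ univ \ {xy.2}, rce A (f xy.1) k) ∂μ

lemma rce_eq {K : ℕ} (A : ℝ) (p : Fin K → ℝ) (hp : IsProbVec p) (y : Fin K) :
    rce A p y = -A + A * p y := by
  have h : ∀ k, p k * clog A (onehot y k) = p k * A - (if k = y then p k * A else 0) := by
    intro k; by_cases h : k = y <;> simp [clog, onehot, h]
  simp only [rce, h, Finset.sum_sub_distrib, Finset.sum_ite_eq', Finset.mem_univ, if_true,
    ← Finset.sum_mul, hp.2]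
  ring

lemma sum_rce {K : ℕ} (A : ℝ) (p : Fin K → ℝ) (hp : IsProbVec p) (y : Fin K) :
    ∑ k ∈ univ \ {y}, rce A p k = -A * ((K : ℝ) - 1) + A * (1 - p y) := by
  have hsum : ∑ k ∈ univ \ {y}, p k = 1 - p y := by
    have := Finset.sum_sdiff_eq_sub (Finset.subset_univ {y}) (f := p)
    simp [this, hp.2]
  calc ∑ k ∈ univ \ {y}, rce A p k = ∑ k ∈ univ \ {y}, (-A + A * p k) := by
        refine Finset.sum_congr rfl fun k _ => rce_eq A p hp k
    _ = -A * ((K : ℝ) - 1) + A * (1 - p y) := by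
        rw [Finset.sum_add_distrib, Finset.sum_const, ← Finset.mul_sum, hsum]
        have hK1 : 1 ≤ K := y.pos
        simp [Finset.card_sdiff_of_subset (Finset.subset_univ {y})]
        push_cast [hK1]
        ring

lemma meas_eval {𝒳 : Type*} [MeasurableSpace 𝒳] {K : ℕ} (f : 𝒳 → Fin K → ℝ)
    (hf : IsClassifier f) : Measurable fun xy : 𝒳 × Fin K => f xy.1 xy.2 := by
  have : (fun xy : 𝒳 × Fin K => f xy.1 xy.2)
      = fun xy => ∑ k, if xy.2 = k then f xy.1 k else 0 := by
    funext xy; simp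
  rw [this]
  refine Finset.measurable_sum _ fun k _ => ?_
  exact Measurable.ite (measurable_snd (measurableSet_singleton k)) (hf.2 k) measurable_const

lemma integ_eval {𝒳 : Type*} [MeasurableSpace 𝒳] {K : ℕ} (μ : Measure (𝒳 × Fin K))
    [IsProbabilityMeasure μ] (f : 𝒳 → Fin K → ℝ) (hf : IsClassifier f) :
    Integrable (fun xy : 𝒳 × Fin K => f xy.1 xy.2) μ := by
  refine Integrable.mono' (integrable_const 1) (meas_eval f hf).aestronglyMeasurable ?_
  filter_upwards with xy
  rw [Real.norm_eq_abs, abs_of_nonneg ((hf.1 xy.1).1 xy.2)]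
  calc f xy.1 xy.2 ≤ ∑ k, f xy.1 k :=
        Finset.single_le_sum (fun k _ => (hf.1 xy.1).1 k) (Finset.mem_univ _)
    _ = 1 := (hf.1 xy.1).2

lemma cleanRisk_eq {𝒳 : Type*} [MeasurableSpace 𝒳] {K : ℕ} (A : ℝ) (μ : Measure (𝒳 × Fin K))
    [IsProbabilityMeasure μ] (f : 𝒳 → Fin K → ℝ) (hf : IsClassifier f) :
    cleanRisk A μ f = -A + A * ∫ xy, f xy.1 xy.2 ∂μ := by
  have h : cleanRisk A μ f = ∫ xy, (-A + A * f xy.1 xy.2) ∂μ := by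
    refine integral_congr_ae (Filter.Eventually.of_forall fun xy => ?_)
    exact rce_eq A _ (hf.1 xy.1) _
  rw [h, integral_add (integrable_const _) ((integ_eval μ f hf).const_mul A),
    integral_const, integral_const_mul]
  simp

lemma symNoisyRisk_eq {𝒳 : Type*} [MeasurableSpace 𝒳] {K : ℕ} (A : ℝ) (μ : Measure (𝒳 × Fin K))
    [IsProbabilityMeasure μ] (η : ℝ) (f : 𝒳 → Fin K → ℝ) (hf : IsClassifier f) :
    symNoisyRisk A μ η f = ((1 - η) * (-A) + (η / ((K : ℝ) - 1)) * (-A * ((K : ℝ) - 1) + A))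
      + ((1 - η) * A - (η / ((K : ℝ) - 1)) * A) * ∫ xy, f xy.1 xy.2 ∂μ := by
  have h : symNoisyRisk A μ η f
      = ∫ xy, (((1 - η) * (-A) + (η / ((K : ℝ) - 1)) * (-A * ((K : ℝ) - 1) + A))
        + ((1 - η) * A - (η / ((K : ℝ) - 1)) * A) * f xy.1 xy.2) ∂μ := by
    refine integral_congr_ae (Filter.Eventually.of_forall fun xy => ?_)
    simp only [sum_rce A (f xy.1) (hf.1 xy.1) xy.2, rce_eq A (f xy.1) (hf.1 xy.1) xy.2]
    ring
  rw [h, integral_add (integrable_const _) ((integ_eval μ f hf).const_mul _),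
    integral_const, integral_const_mul]
  simp

/-- For any two classifiers `f₁` and `f₂` and any noise rate `η ∈ [0, 1)`, the difference
of noisy risks is proportional to the difference of clean risks:
`R^η(f₁) - R^η(f₂) = (1 - ηK/(K-1)) · (R(f₁) - R(f₂))`. -/
theorem symNoisyRisk_sub_eq {𝒳 : Type*} [MeasurableSpace 𝒳] {K : ℕ} (hK : 2 ≤ K)
    (A : ℝ) (hA : A < 0) (μ : Measure (𝒳 × Fin K)) [IsProbabilityMeasure μ]
    (f₁ f₂ : 𝒳 → Fin K → ℝ) (hf₁ : IsClassifier f₁) (hf₂ : IsClassifier f₂)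
    (η : ℝ) (hη0 : 0 ≤ η) (hη1 : η < 1) :
    symNoisyRisk A μ η f₁ - symNoisyRisk A μ η f₂
      = (1 - η * K / ((K : ℝ) - 1)) * (cleanRisk A μ f₁ - cleanRisk A μ f₂) := by
  have hKne : ((K : ℝ) - 1) ≠ 0 := by
    have : (2 : ℝ) ≤ (K : ℝ) := by exact_mod_cast hK
    linarith
  rw [symNoisyRisk_eq A μ η f₁ hf₁, symNoisyRisk_eq A μ η f₂ hf₂,
    cleanRisk_eq A μ f₁ hf₁, cleanRisk_eq A μ f₂ hf₂]
  field_simp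
  ring
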